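/- Let p be a prime, n ≥ 1, α > 0, N ∈ ℤ, Ω = B_N ⊆ ℚ_p^n, f ∈ L²(Ω), g ∈ L¹(Ω^c). If u₁ ∈ H^α_g(Ω) and u₂ ∈ H^α_g(Ω) are both weak solutions of the Neumann problem D^{α,n}u = f on Ω, N_α u = g on Ω^c, then there is a constant c ∈ ℝ such that u₁ − u₂ = c almost everywhere on K^n; that is, the weak solution is unique up to an additive constant. -/

import Mathlib

/-!
Testing both weak formulations with `w = u₁ - u₂ ∈ H^α_g(Ω)` and subtracting (the right-hand
sides agree and `c_{n,α} > 0`) shows that the nonlocal energy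
`∬_{(K^n × K^n) ∖ (Ω^c × Ω^c)} |w(x) - w(y)|² / ‖x - y‖^{n+α}` vanishes. Hence `w(x) = w(y)` for
almost every pair with `x ∈ Ω`; since `Ω` has positive measure, some `x₀ ∈ Ω` is good, and then
`w = w(x₀)` almost everywhere.
-/

noncomputable section

open MeasureTheory Metric ENNReal

instance (p : ℕ) [Fact p.Prime] : MeasurableSpace ℚ_[p] := borel _
instance (p : ℕ) [Fact p.Prime] : BorelSpace ℚ_[p] := ⟨rfl⟩

/-- The closed unit ball `ℤ_p ⊆ ℚ_p` as a positive compact set. -/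
def padicUnitBall (p : ℕ) [Fact p.Prime] : TopologicalSpace.PositiveCompacts ℚ_[p] where
  carrier := Metric.closedBall 0 1
  isCompact' := isCompact_closedBall 0 1
  interior_nonempty' := by
    rw [IsOpen.interior_eq (IsUltrametricDist.isOpen_closedBall 0 one_ne_zero)]
    exact ⟨0, Metric.mem_closedBall_self zero_le_one⟩

/-- Additive Haar measure on `ℚ_p`, normalized so that `ℤ_p` has measure `1`. -/
def padicHaar (p : ℕ) [Fact p.Prime] : Measure ℚ_[p] :=
  Measure.addHaarMeasure (padicUnitBall p)

/-- The product Haar measure on `K^n = ℚ_p^n`, normalized so that `ℤ_p^n` has measure `1`. -/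
def padicHaarN (p : ℕ) [Fact p.Prime] (n : ℕ) : Measure (Fin n → ℚ_[p]) :=
  Measure.pi fun _ => padicHaar p

/-- The ball `B_N = {x ∈ K^n : ‖x‖ ≤ p^N}`, where `‖x‖ = max |x_j|_p` is the sup norm. -/
def Bball (p : ℕ) [Fact p.Prime] (n : ℕ) (N : ℤ) : Set (Fin n → ℚ_[p]) :=
  {x | ‖x‖ ≤ (p : ℝ) ^ N}

/-- The constant `c_{n,α} = (p^α − 1)/(1 − p^{−α−n})`. -/
def cna (p n : ℕ) (α : ℝ) : ℝ := ((p : ℝ) ^ α - 1) / (1 - (p : ℝ) ^ (-α - (n : ℝ)))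

/-- The Vladimirov–Taibleson operator `(D^{α,n}u)(x) = c_{n,α} ∫ (u(x)−u(y))/‖x−y‖^{n+α} dy`. -/
def Dop (p : ℕ) [Fact p.Prime] (n : ℕ) (α : ℝ) (u : (Fin n → ℚ_[p]) → ℝ)
    (x : Fin n → ℚ_[p]) : ℝ :=
  cna p n α * ∫ y, (u x - u y) / ‖x - y‖ ^ ((n : ℝ) + α) ∂padicHaarN p n

/-- The nonlocal normal derivative `(N_α u)(x) = c_{n,α} ∫_Ω (u(x)−u(y))/‖x−y‖^{n+α} dy`. -/
def Nop (p : ℕ) [Fact p.Prime] (n : ℕ) (α : ℝ) (N : ℤ) (u : (Fin n → ℚ_[p]) → ℝ)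
    (x : Fin n → ℚ_[p]) : ℝ :=
  cna p n α * ∫ y in Bball p n N, (u x - u y) / ‖x - y‖ ^ ((n : ℝ) + α) ∂padicHaarN p n

/-- The squared norm of the space `H^α_ρ(Ω)`, `Ω = B_N` (value in `[0,∞]`). -/
def normSqH (p : ℕ) [Fact p.Prime] (n : ℕ) (α : ℝ) (N : ℤ)
    (ρ u : (Fin n → ℚ_[p]) → ℝ) : ℝ≥0∞ :=
  (∫⁻ x in Bball p n N, ENNReal.ofReal ((u x) ^ 2) ∂padicHaarN p n)
  + (∫⁻ x in (Bball p n N)ᶜ, ENNReal.ofReal (|ρ x| * (u x) ^ 2) ∂padicHaarN p n)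
  + ∫⁻ z in ((Bball p n N)ᶜ ×ˢ (Bball p n N)ᶜ)ᶜ,
      ENNReal.ofReal ((u z.1 - u z.2) ^ 2 / ‖z.1 - z.2‖ ^ ((n : ℝ) + α))
      ∂((padicHaarN p n).prod (padicHaarN p n))

/-- Membership in `H^α_ρ(Ω)`: measurable with finite `H^α_ρ(Ω)`-norm. -/
def MemH (p : ℕ) [Fact p.Prime] (n : ℕ) (α : ℝ) (N : ℤ)
    (ρ u : (Fin n → ℚ_[p]) → ℝ) : Prop :=
  Measurable u ∧ normSqH p n α N ρ u < ⊤

/-- `u` is a weak solution of the Neumann problem `D^{α,n}u = f` on `Ω`,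
`N_α u = g` on `Ω^c`, where `Ω = B_N`. -/
def IsWeakSolution (p : ℕ) [Fact p.Prime] (n : ℕ) (α : ℝ) (N : ℤ)
    (f g u : (Fin n → ℚ_[p]) → ℝ) : Prop :=
  MemH p n α N g u ∧
  ∀ v : (Fin n → ℚ_[p]) → ℝ, MemH p n α N g v →
    cna p n α / 2 *
      ∫ z in ((Bball p n N)ᶜ ×ˢ (Bball p n N)ᶜ)ᶜ,
        (u z.1 - u z.2) * (v z.1 - v z.2) / ‖z.1 - z.2‖ ^ ((n : ℝ) + α)
        ∂((padicHaarN p n).prod (padicHaarN p n))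
    = (∫ x in Bball p n N, f x * v x ∂padicHaarN p n)
      + ∫ y in (Bball p n N)ᶜ, g y * v y ∂padicHaarN p n

section WeightedSquares

variable {Y : Type*} [MeasurableSpace Y] {ν : Measure Y} {c : Y → ℝ}

lemma lintegral_ofReal_mul_sub_sq_lt_top (hc : ∀ y, 0 ≤ c y) {U V : Y → ℝ}
    (hcm : AEMeasurable c ν) (hUm : AEMeasurable U ν)
    (hU : ∫⁻ y, ENNReal.ofReal (c y * U y ^ 2) ∂ν < ⊤)
    (hV : ∫⁻ y, ENNReal.ofReal (c y * V y ^ 2) ∂ν < ⊤) :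
    ∫⁻ y, ENNReal.ofReal (c y * (U y - V y) ^ 2) ∂ν < ⊤ := by
  have hbound : ∀ y, ENNReal.ofReal (c y * (U y - V y) ^ 2)
      ≤ 2 * ENNReal.ofReal (c y * U y ^ 2) + 2 * ENNReal.ofReal (c y * V y ^ 2) := by
    intro y
    rw [← ENNReal.ofReal_ofNat 2, ← ENNReal.ofReal_mul zero_le_two,
      ← ENNReal.ofReal_mul zero_le_two, ← ENNReal.ofReal_add
        (mul_nonneg zero_le_two (mul_nonneg (hc y) (sq_nonneg _)))
        (mul_nonneg zero_le_two (mul_nonneg (hc y) (sq_nonneg _)))]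
    exact ENNReal.ofReal_le_ofReal (by nlinarith [mul_nonneg (hc y) (sq_nonneg (U y + V y))])
  calc ∫⁻ y, ENNReal.ofReal (c y * (U y - V y) ^ 2) ∂ν
      ≤ ∫⁻ y, 2 * ENNReal.ofReal (c y * U y ^ 2) + 2 * ENNReal.ofReal (c y * V y ^ 2) ∂ν :=
        lintegral_mono hbound
    _ = 2 * ∫⁻ y, ENNReal.ofReal (c y * U y ^ 2) ∂ν
        + 2 * ∫⁻ y, ENNReal.ofReal (c y * V y ^ 2) ∂ν := by
        rw [lintegral_add_left' (by fun_prop), lintegral_const_mul' _ _ (by simp),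
          lintegral_const_mul' _ _ (by simp)]
    _ < ⊤ := by finiteness

lemma integrable_mul_sq_of_lintegral_lt_top (hc : ∀ y, 0 ≤ c y) {U : Y → ℝ}
    (hcm : AEMeasurable c ν) (hUm : AEMeasurable U ν)
    (hU : ∫⁻ y, ENNReal.ofReal (c y * U y ^ 2) ∂ν < ⊤) :
    Integrable (fun y => c y * U y ^ 2) ν :=
  (lintegral_ofReal_ne_top_iff_integrable (by fun_prop)
    (ae_of_all _ fun y => mul_nonneg (hc y) (sq_nonneg _))).1 hU.ne

lemma integrable_mul_mul_of_lintegral_lt_top (hc : ∀ y, 0 ≤ c y) {U V : Y → ℝ}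
    (hcm : AEMeasurable c ν) (hUm : AEMeasurable U ν) (hVm : AEMeasurable V ν)
    (hU : ∫⁻ y, ENNReal.ofReal (c y * U y ^ 2) ∂ν < ⊤)
    (hV : ∫⁻ y, ENNReal.ofReal (c y * V y ^ 2) ∂ν < ⊤) :
    Integrable (fun y => c y * (U y * V y)) ν := by
  refine ((integrable_mul_sq_of_lintegral_lt_top hc hcm hUm hU).add
    (integrable_mul_sq_of_lintegral_lt_top hc hcm hVm hV)).mono' (by fun_prop)
    (ae_of_all _ fun y => ?_)
  rw [Pi.add_apply, Real.norm_eq_abs, abs_mul, abs_of_nonneg (hc y), abs_mul]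
  nlinarith [mul_nonneg (hc y) (sq_nonneg (|U y| - |V y|)), sq_abs (U y), sq_abs (V y), hc y]

end WeightedSquares

section NonlocalForm

variable {X : Type*} [NormedAddCommGroup X] [MeasurableSpace X]
  (μ : Measure X) (R : Set (X × X)) (s : ℝ)

def nonlocalEnergy (u : X → ℝ) : ℝ≥0∞ :=
  ∫⁻ z in R, ENNReal.ofReal ((u z.1 - u z.2) ^ 2 / ‖z.1 - z.2‖ ^ s) ∂μ.prod μ

def nonlocalForm (u v : X → ℝ) : ℝ :=
  ∫ z in R, (u z.1 - u z.2) * (v z.1 - v z.2) / ‖z.1 - z.2‖ ^ s ∂μ.prod μ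

variable {μ R s}

lemma nonlocalEnergy_eq_lintegral_inv_mul (u : X → ℝ) :
    nonlocalEnergy μ R s u = ∫⁻ z in R,
      ENNReal.ofReal ((‖z.1 - z.2‖ ^ s)⁻¹ * (u z.1 - u z.2) ^ 2) ∂μ.prod μ := by
  simp only [nonlocalEnergy, div_eq_inv_mul]

variable [OpensMeasurableSpace X] [MeasurableSub₂ X]

lemma measurable_inv_norm_sub_rpow :
    Measurable fun z : X × X => (‖z.1 - z.2‖ ^ s)⁻¹ := by
  fun_prop

lemma nonlocalEnergy_sub_lt_top {u v : X → ℝ} (hu : Measurable u)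
    (hu' : nonlocalEnergy μ R s u < ⊤) (hv' : nonlocalEnergy μ R s v < ⊤) :
    nonlocalEnergy μ R s (u - v) < ⊤ := by
  rw [nonlocalEnergy_eq_lintegral_inv_mul] at hu' hv' ⊢
  convert lintegral_ofReal_mul_sub_sq_lt_top (fun z => inv_nonneg.2 (by positivity))
    measurable_inv_norm_sub_rpow.aemeasurable (by fun_prop) hu' hv' using 4 with z
  simp only [Pi.sub_apply]
  ring

lemma integrable_nonlocalForm_integrand {u v : X → ℝ} (hu : Measurable u) (hv : Measurable v)
    (hu' : nonlocalEnergy μ R s u < ⊤) (hv' : nonlocalEnergy μ R s v < ⊤) :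
    Integrable (fun z : X × X => (u z.1 - u z.2) * (v z.1 - v z.2) / ‖z.1 - z.2‖ ^ s)
      ((μ.prod μ).restrict R) := by
  rw [nonlocalEnergy_eq_lintegral_inv_mul] at hu' hv'
  simpa only [div_eq_inv_mul] using integrable_mul_mul_of_lintegral_lt_top
    (fun z => inv_nonneg.2 (by positivity)) measurable_inv_norm_sub_rpow.aemeasurable
    (by fun_prop) (by fun_prop) hu' hv'

lemma nonlocalForm_sub_left {u₁ u₂ v : X → ℝ} (hu₁ : Measurable u₁) (hu₂ : Measurable u₂)
    (hv : Measurable v) (hu₁' : nonlocalEnergy μ R s u₁ < ⊤)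
    (hu₂' : nonlocalEnergy μ R s u₂ < ⊤) (hv' : nonlocalEnergy μ R s v < ⊤) :
    nonlocalForm μ R s (u₁ - u₂) v = nonlocalForm μ R s u₁ v - nonlocalForm μ R s u₂ v := by
  rw [nonlocalForm, nonlocalForm, nonlocalForm, ← integral_sub
    (integrable_nonlocalForm_integrand hu₁ hv hu₁' hv')
    (integrable_nonlocalForm_integrand hu₂ hv hu₂' hv')]
  congr 1 with z
  simp only [Pi.sub_apply]
  ring

lemma ae_eq_of_nonlocalForm_self_eq_zero {u : X → ℝ} (hu : Measurable u)
    (hu' : nonlocalEnergy μ R s u < ⊤) (h : nonlocalForm μ R s u u = 0) :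
    ∀ᵐ z ∂(μ.prod μ).restrict R, u z.1 = u z.2 := by
  have hnonneg : 0 ≤ fun z : X × X => (u z.1 - u z.2) * (u z.1 - u z.2) / ‖z.1 - z.2‖ ^ s :=
    fun z => div_nonneg (mul_self_nonneg _) (by positivity)
  filter_upwards [(integral_eq_zero_iff_of_nonneg hnonneg
    (integrable_nonlocalForm_integrand hu hu hu' hu')).1 h] with z hz
  rcases div_eq_zero_iff.1 hz with hsq | hker
  · exact sub_eq_zero.1 (mul_self_eq_zero.1 hsq)
  · have hdiag : z.1 = z.2 :=
      sub_eq_zero.1 (norm_eq_zero.1 ((Real.rpow_eq_zero_iff_of_nonneg (norm_nonneg _)).1 hker).1)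
    rw [hdiag]

end NonlocalForm

lemma exists_ae_eq_const_of_ae_restrict_prod {X β : Type*} [MeasurableSpace X] {μ : Measure X}
    [SFinite μ] {Ω : Set X} (hΩ : μ Ω ≠ 0) {w : X → β}
    (h : ∀ᵐ z ∂(μ.restrict Ω).prod μ, w z.1 = w z.2) : ∃ c, ∀ᵐ x ∂μ, w x = c := by
  have : (ae (μ.restrict Ω)).NeBot := ae_neBot.2 (by simpa using hΩ)
  obtain ⟨x₀, hx₀⟩ := (Measure.ae_ae_of_ae_prod h).exists
  exact ⟨w x₀, hx₀.mono fun _ hx => hx.symm⟩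

lemma cna_pos (p n : ℕ) [Fact p.Prime] {α : ℝ} (hα : 0 < α) : 0 < cna p n α := by
  have hp : (1 : ℝ) < p := by exact_mod_cast (Fact.out : p.Prime).one_lt
  refine div_pos (sub_pos.2 (Real.one_lt_rpow hp hα)) (sub_pos.2 ?_)
  exact Real.rpow_lt_one_of_one_lt_of_neg hp (by linarith [(n.cast_nonneg : (0 : ℝ) ≤ n)])

instance (p : ℕ) [Fact p.Prime] (n : ℕ) : (padicHaarN p n).IsAddHaarMeasure := by
  unfold padicHaarN padicHaar
  infer_instance

lemma Bball_eq_ball (p : ℕ) [Fact p.Prime] (n : ℕ) (N : ℤ) :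
    Bball p n N = ball 0 ((p : ℝ) ^ (N + 1)) := by
  have hp : (0 : ℝ) < p := by exact_mod_cast (Fact.out : p.Prime).pos
  ext x
  change ‖x‖ ≤ _ ↔ _
  rw [mem_ball_zero_iff, pi_norm_le_iff_of_nonneg (zpow_pos hp N).le,
    pi_norm_lt_iff (zpow_pos hp _)]
  exact forall_congr' fun i => Padic.norm_le_pow_iff_norm_lt_pow_add_one (x i) N

lemma padicHaarN_Bball_ne_zero (p : ℕ) [Fact p.Prime] (n : ℕ) (N : ℤ) :
    padicHaarN p n (Bball p n N) ≠ 0 := by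
  have hp : (0 : ℝ) < p := by exact_mod_cast (Fact.out : p.Prime).pos
  rw [Bball_eq_ball]
  exact (isOpen_ball.measure_pos _ ⟨0, mem_ball_self (zpow_pos hp _)⟩).ne'

section MemH

variable {p : ℕ} [Fact p.Prime] {n : ℕ} {α : ℝ} {N : ℤ} {g u v : (Fin n → ℚ_[p]) → ℝ}

lemma MemH.nonlocalEnergy_lt_top (hu : MemH p n α N g u) :
    nonlocalEnergy (padicHaarN p n) ((Bball p n N)ᶜ ×ˢ (Bball p n N)ᶜ)ᶜ (n + α) u < ⊤ :=
  (ENNReal.add_lt_top.1 hu.2).2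

lemma MemH.sub (hg : Measurable g) (hu : MemH p n α N g u) (hv : MemH p n α N g v) :
    MemH p n α N g (u - v) := by
  obtain ⟨hu₁, hu₂⟩ := ENNReal.add_lt_top.1 (ENNReal.add_lt_top.1 hu.2).1
  obtain ⟨hv₁, hv₂⟩ := ENNReal.add_lt_top.1 (ENNReal.add_lt_top.1 hv.2).1
  refine ⟨hu.1.sub hv.1, ENNReal.add_lt_top.2 ⟨ENNReal.add_lt_top.2 ⟨?_, ?_⟩,
    nonlocalEnergy_sub_lt_top hu.1 hu.nonlocalEnergy_lt_top hv.nonlocalEnergy_lt_top⟩⟩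
  · simpa only [one_mul, Pi.sub_apply] using
      lintegral_ofReal_mul_sub_sq_lt_top (c := fun _ => 1) (fun _ => zero_le_one)
        aemeasurable_const hu.1.aemeasurable
        (by simpa only [one_mul] using hu₁) (by simpa only [one_mul] using hv₁)
  · exact lintegral_ofReal_mul_sub_sq_lt_top (fun _ => abs_nonneg _) hg.abs.aemeasurable
      hu.1.aemeasurable hu₂ hv₂

end MemH

lemma IsWeakSolution.nonlocalForm_eq {p : ℕ} [Fact p.Prime] {n : ℕ} {α : ℝ} (hα : 0 < α)
    {N : ℤ} {f g u₁ u₂ v : (Fin n → ℚ_[p]) → ℝ} (hu₁ : IsWeakSolution p n α N f g u₁)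
    (hu₂ : IsWeakSolution p n α N f g u₂) (hv : MemH p n α N g v) :
    nonlocalForm (padicHaarN p n) ((Bball p n N)ᶜ ×ˢ (Bball p n N)ᶜ)ᶜ (n + α) u₁ v
      = nonlocalForm (padicHaarN p n) ((Bball p n N)ᶜ ×ˢ (Bball p n N)ᶜ)ᶜ (n + α) u₂ v :=
  mul_left_cancel₀ (div_pos (cna_pos p n hα) two_pos).ne' ((hu₁.2 v hv).trans (hu₂.2 v hv).symm)

theorem padic_neumann_uniqueness_general (p : ℕ) [Fact p.Prime] (n : ℕ)
    (α : ℝ) (hα : 0 < α) (N : ℤ)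
    (f g : (Fin n → ℚ_[p]) → ℝ)
    (hgmeas : Measurable g)
    (u₁ u₂ : (Fin n → ℚ_[p]) → ℝ)
    (hu₁ : IsWeakSolution p n α N f g u₁)
    (hu₂ : IsWeakSolution p n α N f g u₂) :
    ∃ c : ℝ, ∀ᵐ x ∂padicHaarN p n, u₁ x - u₂ x = c := by
  set μ := padicHaarN p n
  set Ω := Bball p n N
  have hw : MemH p n α N g (u₁ - u₂) := hu₁.1.sub hgmeas hu₂.1
  have hform : nonlocalForm μ (Ωᶜ ×ˢ Ωᶜ)ᶜ (n + α) (u₁ - u₂) (u₁ - u₂) = 0 := by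
    rw [nonlocalForm_sub_left hu₁.1.1 hu₂.1.1 hw.1 hu₁.1.nonlocalEnergy_lt_top
      hu₂.1.nonlocalEnergy_lt_top hw.nonlocalEnergy_lt_top, hu₁.nonlocalForm_eq hα hu₂ hw, sub_self]
  have hdiag := ae_eq_of_nonlocalForm_self_eq_zero hw.1 hw.nonlocalEnergy_lt_top hform
  have hprod : (μ.restrict Ω).prod μ ≤ (μ.prod μ).restrict (Ωᶜ ×ˢ Ωᶜ)ᶜ :=
    calc (μ.restrict Ω).prod μ = (μ.prod μ).restrict (Ω ×ˢ Set.univ) := by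
          rw [← Measure.prod_restrict, Measure.restrict_univ]
      _ ≤ (μ.prod μ).restrict (Ωᶜ ×ˢ Ωᶜ)ᶜ :=
          Measure.restrict_mono (fun z hz hz' => hz'.1 hz.1) le_rfl
  exact exists_ae_eq_const_of_ae_restrict_prod (padicHaarN_Bball_ne_zero p n N)
    (ae_mono hprod hdiag)

/-- Uniqueness: two weak solutions of the Neumann problem
`D^{α,n}u = f` on `Ω`, `N_α u = g` on `Ω^c` differ a.e. by an additive constant. -/
theorem padic_neumann_uniqueness (p : ℕ) [Fact p.Prime] (n : ℕ) (hn : 1 ≤ n)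
    (α : ℝ) (hα : 0 < α) (N : ℤ)
    (f g : (Fin n → ℚ_[p]) → ℝ)
    (hfmeas : Measurable f)
    (hfL2 : (∫⁻ x in Bball p n N, ENNReal.ofReal ((f x) ^ 2) ∂padicHaarN p n) < ⊤)
    (hgmeas : Measurable g)
    (hgL1 : IntegrableOn g (Bball p n N)ᶜ (padicHaarN p n))
    (u₁ u₂ : (Fin n → ℚ_[p]) → ℝ)
    (hu₁ : IsWeakSolution p n α N f g u₁)
    (hu₂ : IsWeakSolution p n α N f g u₂) :
    ∃ c : ℝ, ∀ᵐ x ∂padicHaarN p n, u₁ x - u₂ x = c :=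
  padic_neumann_uniqueness_general p n α hα N f g hgmeas u₁ u₂ hu₁ hu₂
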